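/- In L_excore, assume []_Y is a monomorphism with respect to propagators. If for pure v₁, v₂ : X → P we set a₁ = []_Y ∘ tag ∘ v₁ and a₂ = []_Y ∘ tag ∘ v₂ (propagators X → Y), then a₁ ≡ a₂ is T_excore-equivalent to v₁ ≡ v₂. -/
import Mathlib


/-! The decorated logic for the core language for exceptions `L_excore`.
Types are elements of `Ty`, with a distinguished type `Par` of parameters and an
empty type `Emp` (written `0` in the paper); `Sig` is a signature of pure operations.
`tag : Par → Emp` is a propagator and `untag : Emp → Par` is a catcher. -/

inductive CoTm (Ty : Type) (Par Emp : Ty) (Sig : Ty → Ty → Type) : Ty → Ty → Type where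
  | id (X : Ty) : CoTm Ty Par Emp Sig X X
  | comp {X Y Z : Ty} (g : CoTm Ty Par Emp Sig Y Z) (f : CoTm Ty Par Emp Sig X Y) :
      CoTm Ty Par Emp Sig X Z
  | gen {X Y : Ty} (s : Sig X Y) : CoTm Ty Par Emp Sig X Y
  | fromEmpty (Y : Ty) : CoTm Ty Par Emp Sig Emp Y
  | tag : CoTm Ty Par Emp Sig Par Emp
  | untag : CoTm Ty Par Emp Sig Emp Par

variable {Ty : Type} {Par Emp : Ty} {Sig : Ty → Ty → Type}

/-- The pure terms of `L_excore`. -/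
inductive CoPure : ∀ {X Y : Ty}, CoTm Ty Par Emp Sig X Y → Prop where
  | id (X : Ty) : CoPure (CoTm.id X)
  | comp {X Y Z : Ty} {g : CoTm Ty Par Emp Sig Y Z} {f : CoTm Ty Par Emp Sig X Y} :
      CoPure g → CoPure f → CoPure (CoTm.comp g f)
  | gen {X Y : Ty} (s : Sig X Y) : CoPure (CoTm.gen (Par := Par) (Emp := Emp) s)
  | fromEmpty (Y : Ty) : CoPure (CoTm.fromEmpty (Par := Par) (Sig := Sig) Y)

/-- The propagators of `L_excore`: terms not containing `untag`
(all terms are catchers). -/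
inductive CoPpg : ∀ {X Y : Ty}, CoTm Ty Par Emp Sig X Y → Prop where
  | id (X : Ty) : CoPpg (CoTm.id X)
  | comp {X Y Z : Ty} {g : CoTm Ty Par Emp Sig Y Z} {f : CoTm Ty Par Emp Sig X Y} :
      CoPpg g → CoPpg f → CoPpg (CoTm.comp g f)
  | gen {X Y : Ty} (s : Sig X Y) : CoPpg (CoTm.gen (Par := Par) (Emp := Emp) s)
  | fromEmpty (Y : Ty) : CoPpg (CoTm.fromEmpty (Par := Par) (Sig := Sig) Y)
  | tag : CoPpg (CoTm.tag (Sig := Sig))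

/-- A decorated equation of `L_excore`: a pair of parallel terms together with a
`Bool` which is `true` for a strong equation `≡` and `false` for a weak equation `∼`. -/
def CoEqn (Ty : Type) (Par Emp : Ty) (Sig : Ty → Ty → Type) : Type :=
  Σ X : Ty, Σ Y : Ty, (CoTm Ty Par Emp Sig X Y × CoTm Ty Par Emp Sig X Y) × Bool

mutual
/-- Derivable strong equations of `L_excore` from the axiom set `Ax`. -/
inductive CoSEq (Ax : Set (CoEqn Ty Par Emp Sig)) :
    ∀ {X Y : Ty}, CoTm Ty Par Emp Sig X Y → CoTm Ty Par Emp Sig X Y → Prop where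
  | ax {X Y : Ty} {f g : CoTm Ty Par Emp Sig X Y} :
      (⟨X, Y, (f, g), true⟩ : CoEqn Ty Par Emp Sig) ∈ Ax → CoSEq Ax f g
  | refl {X Y : Ty} (f : CoTm Ty Par Emp Sig X Y) : CoSEq Ax f f
  | symm {X Y : Ty} {f g : CoTm Ty Par Emp Sig X Y} : CoSEq Ax f g → CoSEq Ax g f
  | trans {X Y : Ty} {f g h : CoTm Ty Par Emp Sig X Y} :
      CoSEq Ax f g → CoSEq Ax g h → CoSEq Ax f h
  | subs {X Y Z : Ty} (u : CoTm Ty Par Emp Sig X Y) {v₁ v₂ : CoTm Ty Par Emp Sig Y Z} :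
      CoSEq Ax v₁ v₂ → CoSEq Ax (v₁.comp u) (v₂.comp u)
  | repl {X Y Z : Ty} {v₁ v₂ : CoTm Ty Par Emp Sig X Y} (w : CoTm Ty Par Emp Sig Y Z) :
      CoSEq Ax v₁ v₂ → CoSEq Ax (w.comp v₁) (w.comp v₂)
  | idLeft {X Y : Ty} (f : CoTm Ty Par Emp Sig X Y) : CoSEq Ax ((CoTm.id Y).comp f) f
  | idRight {X Y : Ty} (f : CoTm Ty Par Emp Sig X Y) : CoSEq Ax (f.comp (CoTm.id X)) f
  | assoc {W X Y Z : Ty} (h : CoTm Ty Par Emp Sig Y Z) (g : CoTm Ty Par Emp Sig X Y)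
      (f : CoTm Ty Par Emp Sig W X) : CoSEq Ax ((h.comp g).comp f) (h.comp (g.comp f))
  -- (initial) of the pure sublogic `L_eqn`:
  | initialPure {Y : Ty} {u : CoTm Ty Par Emp Sig Emp Y} :
      CoPure u → CoSEq Ax u (CoTm.fromEmpty Y)
  -- (eq₁): a weak equation between propagators is strong
  | eq₁ {X Y : Ty} {f g : CoTm Ty Par Emp Sig X Y} :
      CoPpg f → CoPpg g → CoWEq Ax f g → CoSEq Ax f g
  -- (eq₂)
  | eq₂ {X Y : Ty} {f g : CoTm Ty Par Emp Sig X Y} :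
      CoWEq Ax f g → CoSEq Ax (f.comp (CoTm.fromEmpty X)) (g.comp (CoTm.fromEmpty X)) →
      CoSEq Ax f g
  -- (eq₃)
  | eq₃ {X : Ty} {f g : CoTm Ty Par Emp Sig Emp X} :
      CoWEq Ax (f.comp CoTm.tag) (g.comp CoTm.tag) → CoSEq Ax f g

/-- Derivable weak equations of `L_excore` from the axiom set `Ax`. -/
inductive CoWEq (Ax : Set (CoEqn Ty Par Emp Sig)) :
    ∀ {X Y : Ty}, CoTm Ty Par Emp Sig X Y → CoTm Ty Par Emp Sig X Y → Prop where
  | ax {X Y : Ty} {f g : CoTm Ty Par Emp Sig X Y} :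
      (⟨X, Y, (f, g), false⟩ : CoEqn Ty Par Emp Sig) ∈ Ax → CoWEq Ax f g
  | symm {X Y : Ty} {f g : CoTm Ty Par Emp Sig X Y} : CoWEq Ax f g → CoWEq Ax g f
  | trans {X Y : Ty} {f g h : CoTm Ty Par Emp Sig X Y} :
      CoWEq Ax f g → CoWEq Ax g h → CoWEq Ax f h
  -- (subs_∼): substitution only by pure terms
  | subsPure {X Y Z : Ty} {u : CoTm Ty Par Emp Sig X Y} {v₁ v₂ : CoTm Ty Par Emp Sig Y Z} :
      CoPure u → CoWEq Ax v₁ v₂ → CoWEq Ax (v₁.comp u) (v₂.comp u)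
  -- (repl_∼): replacement by arbitrary terms
  | repl {X Y Z : Ty} {v₁ v₂ : CoTm Ty Par Emp Sig X Y} (w : CoTm Ty Par Emp Sig Y Z) :
      CoWEq Ax v₁ v₂ → CoWEq Ax (w.comp v₁) (w.comp v₂)
  -- (empty_∼)
  | empty {Y : Ty} (f : CoTm Ty Par Emp Sig Emp Y) : CoWEq Ax f (CoTm.fromEmpty Y)
  -- (≡-to-∼)
  | ofStrong {X Y : Ty} {f g : CoTm Ty Par Emp Sig X Y} : CoSEq Ax f g → CoWEq Ax f g
  -- (ax): untag ∘ tag ∼ id_P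
  | untag_tag : CoWEq Ax ((CoTm.untag (Sig := Sig)).comp CoTm.tag) (CoTm.id Par)
end

/-- Two sets of decorated equations are `T_excore`-equivalent over `Ax` when they
generate the same theory (same strong and weak theorems) over `Ax`. -/
def CoEquiv (Ax E₁ E₂ : Set (CoEqn Ty Par Emp Sig)) : Prop :=
  ∀ (X Y : Ty) (f g : CoTm Ty Par Emp Sig X Y),
    (CoSEq (Ax ∪ E₁) f g ↔ CoSEq (Ax ∪ E₂) f g) ∧
    (CoWEq (Ax ∪ E₁) f g ↔ CoWEq (Ax ∪ E₂) f g)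

/-- `Ax` is a pure (strong) theory: all axioms are strong equations between pure terms. -/
def CoPureAx (Ax : Set (CoEqn Ty Par Emp Sig)) : Prop :=
  ∀ e ∈ Ax, CoPure e.2.2.1.1 ∧ CoPure e.2.2.1.2 ∧ e.2.2.2 = true

theorem coPure_ppg {X Y : Ty} {f : CoTm Ty Par Emp Sig X Y} (h : CoPure f) : CoPpg f := by
  induction h with
  | id X => exact .id X
  | comp _ _ ihg ihf => exact .comp ihg ihf
  | gen s => exact .gen s
  | fromEmpty Y => exact .fromEmpty Y

theorem coSEq_cut {B C : Set (CoEqn Ty Par Emp Sig)}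
    (hS : ∀ e ∈ B, e.2.2.2 = true → CoSEq C e.2.2.1.1 e.2.2.1.2)
    (hW : ∀ e ∈ B, e.2.2.2 = false → CoWEq C e.2.2.1.1 e.2.2.1.2)
    {X Y : Ty} {f g : CoTm Ty Par Emp Sig X Y} (d : CoSEq B f g) : CoSEq C f g := by
  refine CoSEq.rec (Ax := B)
    (motive_1 := fun {X Y} (f g : CoTm Ty Par Emp Sig X Y) _ => CoSEq C f g)
    (motive_2 := fun {X Y} (f g : CoTm Ty Par Emp Sig X Y) _ => CoWEq C f g)
    (fun h => hS _ h rfl)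
    (fun f => .refl f)
    (fun _ ih => .symm ih)
    (fun _ _ ih1 ih2 => .trans ih1 ih2)
    (fun {_ _ _} u {_ _} _ ih => .subs u ih)
    (fun w _ ih => .repl w ih)
    (fun f => .idLeft f)
    (fun f => .idRight f)
    (fun h g f => .assoc h g f)
    (fun hp => .initialPure hp)
    (fun hf hg _ ih => .eq₁ hf hg ih)
    (fun _ _ ih1 ih2 => .eq₂ ih1 ih2)
    (fun _ ih => .eq₃ ih)
    (fun h => hW _ h rfl)
    (fun _ ih => .symm ih)
    (fun _ _ ih1 ih2 => .trans ih1 ih2)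
    (fun hu _ ih => .subsPure hu ih)
    (fun w _ ih => .repl w ih)
    (fun f => .empty f)
    (fun _ ih => .ofStrong ih)
    .untag_tag
    d

theorem coWEq_cut {B C : Set (CoEqn Ty Par Emp Sig)}
    (hS : ∀ e ∈ B, e.2.2.2 = true → CoSEq C e.2.2.1.1 e.2.2.1.2)
    (hW : ∀ e ∈ B, e.2.2.2 = false → CoWEq C e.2.2.1.1 e.2.2.1.2)
    {X Y : Ty} {f g : CoTm Ty Par Emp Sig X Y} (d : CoWEq B f g) : CoWEq C f g := by
  refine CoWEq.rec (Ax := B)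
    (motive_1 := fun {X Y} (f g : CoTm Ty Par Emp Sig X Y) _ => CoSEq C f g)
    (motive_2 := fun {X Y} (f g : CoTm Ty Par Emp Sig X Y) _ => CoWEq C f g)
    (fun h => hS _ h rfl)
    (fun f => .refl f)
    (fun _ ih => .symm ih)
    (fun _ _ ih1 ih2 => .trans ih1 ih2)
    (fun {_ _ _} u {_ _} _ ih => .subs u ih)
    (fun w _ ih => .repl w ih)
    (fun f => .idLeft f)
    (fun f => .idRight f)
    (fun h g f => .assoc h g f)
    (fun hp => .initialPure hp)
    (fun hf hg _ ih => .eq₁ hf hg ih)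
    (fun _ _ ih1 ih2 => .eq₂ ih1 ih2)
    (fun _ ih => .eq₃ ih)
    (fun h => hW _ h rfl)
    (fun _ ih => .symm ih)
    (fun _ _ ih1 ih2 => .trans ih1 ih2)
    (fun hu _ ih => .subsPure hu ih)
    (fun w _ ih => .repl w ih)
    (fun f => .empty f)
    (fun _ ih => .ofStrong ih)
    .untag_tag
    d


/-- In `L_excore`, assume `[]_Y` is a monomorphism with respect to
propagators. For pure `v₁ v₂ : X → P` and `aᵢ = []_Y ∘ tag ∘ vᵢ : X → Y`,
the equation `a₁ ≡ a₂` is `T_excore`-equivalent to `v₁ ≡ v₂`. -/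
theorem coexc_ppg_eq_iff_pure_eq (Ax : Set (CoEqn Ty Par Emp Sig)) (hAx : CoPureAx Ax)
    {X Y : Ty} (v₁ v₂ : CoTm Ty Par Emp Sig X Par) (hv₁ : CoPure v₁) (hv₂ : CoPure v₂)
    -- `[]_Y` is a monomorphism with respect to propagators (in `L_excore`,
    -- i.e. in every theory extending `T_excore`):
    (hmono : ∀ (B : Set (CoEqn Ty Par Emp Sig)), Ax ⊆ B →
      ∀ {Z : Ty} (g₁ g₂ : CoTm Ty Par Emp Sig Z Emp), CoPpg g₁ → CoPpg g₂ →
        CoSEq B ((CoTm.fromEmpty Y).comp g₁) ((CoTm.fromEmpty Y).comp g₂) → CoSEq B g₁ g₂) :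
    CoEquiv Ax
      {(⟨X, Y, ((CoTm.fromEmpty Y).comp (CoTm.tag.comp v₁),
                (CoTm.fromEmpty Y).comp (CoTm.tag.comp v₂)), true⟩ : CoEqn Ty Par Emp Sig)}
      {(⟨X, Par, (v₁, v₂), true⟩ : CoEqn Ty Par Emp Sig)} := by
  set a₁ := (CoTm.fromEmpty (Par := Par) (Sig := Sig) Y).comp (CoTm.tag.comp v₁) with ha₁
  set a₂ := (CoTm.fromEmpty (Par := Par) (Sig := Sig) Y).comp (CoTm.tag.comp v₂) with ha₂
  set E₁ : Set (CoEqn Ty Par Emp Sig) := {⟨X, Y, (a₁, a₂), true⟩} with hE₁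
  set E₂ : Set (CoEqn Ty Par Emp Sig) := {⟨X, Par, (v₁, v₂), true⟩} with hE₂
  -- derive v₁ ≡ v₂ in Ax ∪ E₁
  have hder₁ : CoSEq (Ax ∪ E₁) v₁ v₂ := by
    have ha : CoSEq (Ax ∪ E₁) a₁ a₂ := .ax (Or.inr rfl)
    have ht : CoSEq (Ax ∪ E₁) (CoTm.tag.comp v₁) (CoTm.tag.comp v₂) :=
      hmono _ Set.subset_union_left _ _
        (CoPpg.comp .tag (coPure_ppg hv₁)) (CoPpg.comp .tag (coPure_ppg hv₂)) ha
    have hu₁ : CoWEq (Ax ∪ E₁) ((CoTm.untag.comp CoTm.tag).comp v₁) v₁ :=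
      .trans (.subsPure hv₁ .untag_tag) (.ofStrong (.idLeft v₁))
    have hu₂ : CoWEq (Ax ∪ E₁) ((CoTm.untag.comp CoTm.tag).comp v₂) v₂ :=
      .trans (.subsPure hv₂ .untag_tag) (.ofStrong (.idLeft v₂))
    refine CoSEq.eq₁ (coPure_ppg hv₁) (coPure_ppg hv₂) ?_
    refine CoWEq.trans (CoWEq.symm hu₁) (CoWEq.trans ?_ hu₂)
    refine CoWEq.trans (.ofStrong (.assoc _ _ _)) ?_
    refine CoWEq.trans ?_ (CoWEq.symm (.ofStrong (.assoc _ _ _)))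
    exact .ofStrong (.repl _ ht)
  -- derive a₁ ≡ a₂ in Ax ∪ E₂
  have hder₂ : CoSEq (Ax ∪ E₂) a₁ a₂ := by
    have hv : CoSEq (Ax ∪ E₂) v₁ v₂ := .ax (Or.inr rfl)
    exact .repl _ (.repl _ hv)
  have hS₁ : ∀ e ∈ Ax ∪ E₁, e.2.2.2 = true → CoSEq (Ax ∪ E₂) e.2.2.1.1 e.2.2.1.2 := by
    rintro e (he | rfl) hb
    · obtain ⟨A, B, ⟨p, q⟩, b⟩ := e
      cases hb
      exact .ax (Or.inl he)
    · exact hder₂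
  have hW₁ : ∀ e ∈ Ax ∪ E₁, e.2.2.2 = false → CoWEq (Ax ∪ E₂) e.2.2.1.1 e.2.2.1.2 := by
    rintro e (he | rfl) hb
    · obtain ⟨A, B, ⟨p, q⟩, b⟩ := e
      cases hb
      exact .ax (Or.inl he)
    · simp at hb
  have hS₂ : ∀ e ∈ Ax ∪ E₂, e.2.2.2 = true → CoSEq (Ax ∪ E₁) e.2.2.1.1 e.2.2.1.2 := by
    rintro e (he | rfl) hb
    · obtain ⟨A, B, ⟨p, q⟩, b⟩ := e
      cases hb
      exact .ax (Or.inl he)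
    · exact hder₁
  have hW₂ : ∀ e ∈ Ax ∪ E₂, e.2.2.2 = false → CoWEq (Ax ∪ E₁) e.2.2.1.1 e.2.2.1.2 := by
    rintro e (he | rfl) hb
    · obtain ⟨A, B, ⟨p, q⟩, b⟩ := e
      cases hb
      exact .ax (Or.inl he)
    · simp at hb
  intro X' Y' f g
  exact ⟨⟨coSEq_cut hS₁ hW₁, coSEq_cut hS₂ hW₂⟩, ⟨coWEq_cut hS₁ hW₁, coWEq_cut hS₂ hW₂⟩⟩
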